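/- For any integer t and non-negative integer n: sum_{k=0}^n binom(n,k) * (-1)^k * F_{2n-k+1+t} / (k+1) = (F_{2n+2+t} - F_t) / (n+1), and similarly with Lucas numbers: sum_{k=0}^n binom(n,k) * (-1)^k * L_{2n-k+1+t} / (k+1) = (L_{2n+2+t} - L_t) / (n+1). -/

import Mathlib

open Finset

/-- Lucas numbers on naturals. -/
def lucasNat : ℕ → ℤ
  | 0 => 2
  | 1 => 1
  | n + 2 => lucasNat (n + 1) + lucasNat n

/-- Fibonacci numbers extended to integer indices: `F_{-m} = (-1)^(m-1) F_m`. -/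
def fibZ (n : ℤ) : ℤ :=
  if 0 ≤ n then (Nat.fib n.toNat : ℤ) else (-1) ^ ((-n).toNat + 1) * (Nat.fib (-n).toNat : ℤ)

/-- Lucas numbers extended to integer indices: `L_{-m} = (-1)^m L_m`. -/
def lucasZ (n : ℤ) : ℤ :=
  if 0 ≤ n then lucasNat n.toNat else (-1) ^ (-n).toNat * lucasNat (-n).toNat

/-!
If `G : ℤ → A` satisfies `G (m + 2) = G (m + 1) + G m` for every integer `m`, then the forward
difference with step `-1` is `Δ G y = G (y - 1) - G y = -G (y - 2)`, so `Δ^N` is `(-1)^N` times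
the shift by `-2N`. Expanding `Δ^N` binomially gives
`∑ k ≤ N, (-1)^k C(N,k) G (a - k) = G (a - 2N)`. For `N = n + 1`, `a = 2n + 2 + t`, after removing
the `k = 0` term and using `C(n,k) / (k+1) = C(n+1,k+1) / (n+1)`, this is the claimed identity.
Both extended sequences satisfy the recurrence on all of `ℤ`: `fibZ` is Mathlib's `Int.fib`, and
`L_m = F_{m-1} + F_{m+1}`.
-/

open fwdDiff

lemma fibZ_eq_fib : fibZ = Int.fib := by
  funext n
  rcases n.eq_nat_or_neg with ⟨m, rfl | rfl⟩
  · simp [fibZ]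
  · rcases m with _ | m
    · simp [fibZ]
    · have hneg : ¬ (0 : ℤ) ≤ -((m + 1 : ℕ) : ℤ) := by omega
      simp only [fibZ, if_neg hneg, neg_neg, Int.toNat_natCast, Int.fib_neg_natCast]

lemma lucasNat_eq_fib (n : ℕ) : lucasNat n = Int.fib (n - 1) + Int.fib (n + 1) := by
  induction n using Nat.twoStepInduction with
  | zero => rfl
  | one => rfl
  | more n ih₀ ih₁ =>
    rw [lucasNat, ih₀, ih₁]
    push_cast
    rw [show (n : ℤ) + 2 - 1 = n - 1 + 2 by ring, show (n : ℤ) + 2 + 1 = n + 1 + 2 by ring,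
      Int.fib_add_two, Int.fib_add_two]
    ring_nf

lemma lucasZ_eq_fib (n : ℤ) : lucasZ n = Int.fib (n - 1) + Int.fib (n + 1) := by
  rcases n.eq_nat_or_neg with ⟨m, rfl | rfl⟩
  · simp [lucasZ, lucasNat_eq_fib]
  · rcases m with _ | m
    · rfl
    · have hneg : ¬ (0 : ℤ) ≤ -((m + 1 : ℕ) : ℤ) := by omega
      simp only [lucasZ, if_neg hneg, neg_neg, Int.toNat_natCast, lucasNat_eq_fib]
      rw [show -((m + 1 : ℕ) : ℤ) - 1 = -((m + 2 : ℕ) : ℤ) by push_cast; ring,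
        show -((m + 1 : ℕ) : ℤ) + 1 = -(m : ℤ) by push_cast; ring,
        Int.fib_neg_natCast, Int.fib_neg_natCast]
      simp only [← Int.fib_natCast]
      push_cast
      ring_nf

lemma fibZ_add_two (m : ℤ) : fibZ (m + 2) = fibZ (m + 1) + fibZ m := by
  rw [fibZ_eq_fib, Int.fib_add_two, add_comm]

lemma lucasZ_add_two (m : ℤ) : lucasZ (m + 2) = lucasZ (m + 1) + lucasZ m := by
  have h₁ := Int.fib_add_two (m - 1)
  have h₂ := Int.fib_add_two (m + 1)
  simp only [lucasZ_eq_fib, sub_add_cancel, add_sub_cancel_right] at h₁ h₂ ⊢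
  ring_nf at h₁ h₂ ⊢
  linear_combination h₁ + h₂

section FibonacciLike

variable {A : Type*} [AddCommGroup A] {G : ℤ → A}

lemma fwdDiff_add_two (hG : ∀ m, G (m + 2) = G (m + 1) + G m) (h m : ℤ) :
    Δ_[h] G (m + 2) = Δ_[h] G (m + 1) + Δ_[h] G m := by
  simp only [fwdDiff, add_right_comm m 2 h, add_right_comm m 1 h, hG]
  abel

lemma fwdDiff_neg_one_apply (hG : ∀ m, G (m + 2) = G (m + 1) + G m) (y : ℤ) :
    Δ_[-1] G y = -G (y - 2) := by
  have := hG (y - 2)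
  simp only [fwdDiff, sub_add_cancel, show y - 2 + 1 = y + -1 by ring] at this ⊢
  rw [this]
  abel

lemma fwdDiff_neg_one_iter_apply (hG : ∀ m, G (m + 2) = G (m + 1) + G m) (N : ℕ) (y : ℤ) :
    (Δ_[-1])^[N] G y = (-1 : ℤ) ^ N • G (y - 2 * N) := by
  induction N generalizing G with
  | zero => simp
  | succ N ih =>
    rw [Function.iterate_succ_apply, ih (fwdDiff_add_two hG (-1)), fwdDiff_neg_one_apply hG,
      pow_succ, mul_comm, mul_smul, neg_one_smul]
    push_cast
    ring_nf

lemma neg_one_pow_sub_of_le {k N : ℕ} (hk : k ≤ N) :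
    (-1 : ℤ) ^ (N - k) = (-1) ^ N * (-1) ^ k := by
  obtain ⟨d, rfl⟩ := Nat.exists_eq_add_of_le hk
  rw [Nat.add_sub_cancel_left, pow_add, mul_right_comm, ← pow_add, ← two_mul, pow_mul]
  simp

theorem sum_range_choose_mul_neg_one_pow_smul (hG : ∀ m, G (m + 2) = G (m + 1) + G m)
    (N : ℕ) (a : ℤ) :
    ∑ k ∈ range (N + 1), ((-1 : ℤ) ^ k * N.choose k) • G (a - k) = G (a - 2 * N) := by
  have h := fwdDiff_iter_eq_sum_shift (-1) G N a
  rw [fwdDiff_neg_one_iter_apply hG] at h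
  calc ∑ k ∈ range (N + 1), ((-1 : ℤ) ^ k * N.choose k) • G (a - k)
      = (-1 : ℤ) ^ N • ∑ k ∈ range (N + 1),
          ((-1 : ℤ) ^ (N - k) * N.choose k) • G (a + k • -1) := by
        rw [smul_sum]
        refine sum_congr rfl fun k hk => ?_
        rw [neg_one_pow_sub_of_le (Nat.lt_succ_iff.mp (mem_range.mp hk)), smul_smul,
          nsmul_eq_mul, mul_neg_one, ← sub_eq_add_neg, ← mul_assoc, ← mul_assoc, ← pow_add,
          ← two_mul, pow_mul]
        simp
    _ = G (a - 2 * N) := by rw [← h, smul_smul, ← pow_add, ← two_mul, pow_mul]; simp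

theorem sum_range_choose_succ_mul_neg_one_pow_smul (hG : ∀ m, G (m + 2) = G (m + 1) + G m)
    (n : ℕ) (a : ℤ) :
    ∑ k ∈ range (n + 1), ((-1 : ℤ) ^ k * (n + 1).choose (k + 1)) • G (a - k - 1) =
      G a - G (a - 2 * (n + 1)) := by
  have h := sum_range_choose_mul_neg_one_pow_smul hG (n + 1) a
  rw [sum_range_succ'] at h
  simp only [pow_succ, Nat.cast_add, Nat.cast_one, ← sub_sub, mul_neg_one, neg_mul, neg_smul,
    sum_neg_distrib, pow_zero, Nat.choose_zero_right, Nat.cast_zero, sub_zero, mul_one,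
    one_smul] at h
  rw [← h]
  abel

end FibonacciLike

lemma choose_div_succ {K : Type*} [Field K] [CharZero K] (n k : ℕ) :
    (n.choose k : K) / (k + 1) = ((n + 1).choose (k + 1) : K) / (n + 1) := by
  rw [div_eq_div_iff (Nat.cast_add_one_ne_zero k) (Nat.cast_add_one_ne_zero n), mul_comm]
  exact_mod_cast Nat.add_one_mul_choose_eq n k

theorem sum_range_choose_mul_neg_one_pow_div_succ {K : Type*} [Field K] [CharZero K] {G : ℤ → K}
    (hG : ∀ m, G (m + 2) = G (m + 1) + G m) (t : ℤ) (n : ℕ) :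
    ∑ k ∈ range (n + 1), (n.choose k : K) * (-1) ^ k * G (2 * (n : ℤ) - k + 1 + t) / (k + 1) =
      (G (2 * n + 2 + t) - G t) / (n + 1) := by
  have h := sum_range_choose_succ_mul_neg_one_pow_smul hG n (2 * n + 2 + t)
  rw [show (2 * n + 2 + t : ℤ) - 2 * (n + 1) = t by ring] at h
  rw [← h, sum_div]
  refine sum_congr rfl fun k _ => ?_
  rw [zsmul_eq_mul, show (2 * n + 2 + t : ℤ) - k - 1 = 2 * n - k + 1 + t by ring]
  push_cast
  calc _ = (n.choose k : K) / (k + 1) * ((-1) ^ k * G (2 * n - k + 1 + t)) := by ring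
    _ = _ := by rw [choose_div_succ]; ring

theorem stmt_10 (t : ℤ) (n : ℕ) :
    (∑ k ∈ range (n + 1),
      (n.choose k : ℚ) * (-1) ^ k * (fibZ (2 * (n : ℤ) - k + 1 + t) : ℚ) / (k + 1) =
      ((fibZ (2 * n + 2 + t) : ℚ) - fibZ t) / (n + 1)) ∧
    (∑ k ∈ range (n + 1),
      (n.choose k : ℚ) * (-1) ^ k * (lucasZ (2 * (n : ℤ) - k + 1 + t) : ℚ) / (k + 1) =
      ((lucasZ (2 * n + 2 + t) : ℚ) - lucasZ t) / (n + 1)) :=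
  ⟨sum_range_choose_mul_neg_one_pow_div_succ (G := fun m => (fibZ m : ℚ))
      (fun m => by exact_mod_cast fibZ_add_two m) t n,
    sum_range_choose_mul_neg_one_pow_div_succ (G := fun m => (lucasZ m : ℚ))
      (fun m => by exact_mod_cast lucasZ_add_two m) t n⟩
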